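/- Let θ be an invertible antisymmetric real 4×4 matrix, g a symmetric positive definite real 4×4 matrix, e^σ := √(det θ · det g), G := e^{−σ} θ g θᵀ, and ω := θ⁻¹. Then ω is self-dual or anti-self-dual with respect to g (i.e. ⋆_g ω = ω or ⋆_g ω = −ω) if and only if G = g⁻¹, i.e. the effective metric G_{μν} equals the induced metric g_{μν}. -/

import Mathlib

/-!
For antisymmetric `A`, write `⋆A` for the `ε`-contraction `(⋆A)_{μν} = ½ ε_{μναβ} A_{αβ}` and
`Pf A` for its Pfaffian. In dimension four `⋆A · A = -Pf(A) · 1`, so `⋆A = -Pf(A) · A⁻¹`, and the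
Hodge dual is `⋆_g ω = √(det g) · ⋆(g⁻¹ ω g⁻¹)`. Taking `ω = θ⁻¹` and using
`Pf(B A Bᵀ) = det B · Pf A` and `Pf(θ⁻¹) = (Pf θ)⁻¹` gives
`⋆_g θ⁻¹ = -(√(det g) · Pf θ)⁻¹ · g θ g`. Hence `⋆_g ω = ε ω` if and only if
`θ g θᵀ = ε √(det g) Pf θ · g⁻¹`. Both `θ g θᵀ` and `g⁻¹` are positive definite, so the scalar
must be positive; as `det θ = (Pf θ)²`, it is then `|√(det g) Pf θ| = √(det θ · det g) = e^σ`.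
-/

open Matrix

/-- The Levi-Civita symbol on `{0,1,2,3}` with `ε_{0123} = 1`. -/
noncomputable def levicivita (i j k l : Fin 4) : ℝ :=
  ((((j : ℤ) - (i : ℤ)) * ((k : ℤ) - (i : ℤ)) * ((l : ℤ) - (i : ℤ)) *
    ((k : ℤ) - (j : ℤ)) * ((l : ℤ) - (j : ℤ)) * ((l : ℤ) - (k : ℤ)) : ℤ) : ℝ) / 12

/-- The Hodge dual of an antisymmetric 2-form `ω_{μν}` with respect to a metric `g_{μν}`:
`(⋆_g ω)_{μν} = (1/2)·√(det g)·ε_{μναβ} g^{αρ} g^{βτ} ω_{ρτ}`. -/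
noncomputable def hodgeDual (g ω : Matrix (Fin 4) (Fin 4) ℝ) : Matrix (Fin 4) (Fin 4) ℝ :=
  Matrix.of fun μ ν => (1 / 2) * Real.sqrt g.det *
    ∑ α, ∑ β, ∑ ρ, ∑ τ, levicivita μ ν α β * g⁻¹ α ρ * g⁻¹ β τ * ω ρ τ

namespace Matrix

lemma PosDef.pos_of_eq_smul {n : Type*} [Fintype n] [Nonempty n] {A B : Matrix n n ℝ}
    (hA : A.PosDef) (hB : B.PosDef) {r : ℝ} (h : A = r • B) : 0 < r := by
  have hx : (fun _ => 1 : n → ℝ) ≠ 0 :=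
    fun h0 => one_ne_zero (congrFun h0 (Classical.arbitrary n))
  have hApos := hA.dotProduct_mulVec_pos hx
  rw [h, smul_mulVec, dotProduct_smul, smul_eq_mul] at hApos
  exact pos_of_mul_pos_left hApos (hB.dotProduct_mulVec_pos hx).le

variable {n R : Type*} [Fintype n] [DecidableEq n] [CommRing R]

lemma transpose_inv_eq_neg {A : Matrix n n R} (hA : Aᵀ = -A) (h : IsUnit A.det) :
    A⁻¹ᵀ = -A⁻¹ := by
  rw [transpose_nonsing_inv, hA]
  exact inv_eq_left_inv (by rw [neg_mul_neg, nonsing_inv_mul _ h])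

lemma eq_smul_inv_iff_mul_eq_smul_one {A X : Matrix n n R} (h : IsUnit A.det) (r : R) :
    X = r • A⁻¹ ↔ A * X = r • 1 := by
  constructor
  · rintro rfl
    rw [Matrix.mul_smul, mul_nonsing_inv _ h]
  · intro hX
    rw [← nonsing_inv_mul_cancel_left A X h, hX, Matrix.mul_smul, Matrix.mul_one]

lemma eq_smul_inv_iff_mul_eq_smul_one' {A X : Matrix n n R} (h : IsUnit A.det) (r : R) :
    X = r • A⁻¹ ↔ X * A = r • 1 := by
  constructor
  · rintro rfl
    rw [Matrix.smul_mul, nonsing_inv_mul _ h]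
  · intro hX
    rw [← mul_nonsing_inv_cancel_right A X h, hX, Matrix.smul_mul, Matrix.one_mul]

end Matrix

noncomputable def flatHodgeDual (A : Matrix (Fin 4) (Fin 4) ℝ) : Matrix (Fin 4) (Fin 4) ℝ :=
  Matrix.of fun μ ν => (1 / 2) * ∑ α, ∑ β, levicivita μ ν α β * A α β

def pfaffian (A : Matrix (Fin 4) (Fin 4) ℝ) : ℝ :=
  A 0 1 * A 2 3 - A 0 2 * A 1 3 + A 0 3 * A 1 2

lemma hodgeDual_eq_smul_flatHodgeDual (g ω : Matrix (Fin 4) (Fin 4) ℝ) :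
    hodgeDual g ω = √g.det • flatHodgeDual (g⁻¹ * ω * g⁻¹ᵀ) := by
  ext μ ν
  simp only [hodgeDual, flatHodgeDual, of_apply, Matrix.smul_apply, smul_eq_mul, mul_apply,
    transpose_apply, Finset.mul_sum, Finset.sum_mul]
  refine Finset.sum_congr rfl fun α _ => Finset.sum_congr rfl fun β _ => ?_
  rw [Finset.sum_comm]
  refine Finset.sum_congr rfl fun ρ _ => Finset.sum_congr rfl fun τ _ => ?_
  ring

lemma pfaffian_smul (r : ℝ) (A : Matrix (Fin 4) (Fin 4) ℝ) :
    pfaffian (r • A) = r ^ 2 * pfaffian A := by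
  simp only [pfaffian, Matrix.smul_apply, smul_eq_mul]
  ring

section Antisymmetric

variable {A : Matrix (Fin 4) (Fin 4) ℝ}

lemma eq_of_transpose_eq_neg (hA : Aᵀ = -A) :
    A = !![0, A 0 1, A 0 2, A 0 3;
           -A 0 1, 0, A 1 2, A 1 3;
           -A 0 2, -A 1 2, 0, A 2 3;
           -A 0 3, -A 1 3, -A 2 3, 0] := by
  have h : ∀ i j, A j i = -A i j := fun i j => by simpa using congrFun (congrFun hA i) j
  ext i j
  fin_cases i <;> fin_cases j <;> simp <;>
    linarith [h 0 0, h 1 1, h 2 2, h 3 3, h 0 1, h 0 2, h 0 3, h 1 2, h 1 3, h 2 3]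

lemma flatHodgeDual_eq (hA : Aᵀ = -A) :
    flatHodgeDual A = !![0, A 2 3, -A 1 3, A 1 2;
                         -A 2 3, 0, A 0 3, -A 0 2;
                         A 1 3, -A 0 3, 0, A 0 1;
                         -A 1 2, A 0 2, -A 0 1, 0] := by
  conv_lhs => rw [eq_of_transpose_eq_neg hA]
  ext i j
  fin_cases i <;> fin_cases j <;> simp [flatHodgeDual, Fin.sum_univ_four, levicivita] <;>
    norm_num <;> ring

lemma det_eq_pfaffian_sq (hA : Aᵀ = -A) : A.det = pfaffian A ^ 2 := by
  rw [eq_of_transpose_eq_neg hA]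
  simp [pfaffian, det_succ_row_zero, Fin.sum_univ_succ, Fin.succAbove]
  ring

lemma pfaffian_ne_zero (hA : Aᵀ = -A) (h : IsUnit A.det) : pfaffian A ≠ 0 := by
  rw [det_eq_pfaffian_sq hA] at h
  exact (pow_ne_zero_iff two_ne_zero).mp h.ne_zero

lemma pfaffian_mul_mul_transpose (B : Matrix (Fin 4) (Fin 4) ℝ) (hA : Aᵀ = -A) :
    pfaffian (B * A * Bᵀ) = B.det * pfaffian A := by
  rw [eq_of_transpose_eq_neg hA]
  simp [pfaffian, mul_apply, det_succ_row_zero, Fin.sum_univ_succ, Fin.succAbove]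
  ring

lemma pfaffian_flatHodgeDual (hA : Aᵀ = -A) : pfaffian (flatHodgeDual A) = pfaffian A := by
  rw [flatHodgeDual_eq hA]
  simp [pfaffian]
  ring

lemma flatHodgeDual_mul_self (hA : Aᵀ = -A) : flatHodgeDual A * A = -pfaffian A • 1 := by
  rw [flatHodgeDual_eq hA]
  conv_lhs => rw [eq_of_transpose_eq_neg hA]
  ext i j
  fin_cases i <;> fin_cases j <;> simp [pfaffian, mul_apply, Fin.sum_univ_four] <;> ring

lemma inv_eq_smul_flatHodgeDual (hA : Aᵀ = -A) (hpf : pfaffian A ≠ 0) :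
    A⁻¹ = -(pfaffian A)⁻¹ • flatHodgeDual A :=
  inv_eq_left_inv <| by
    rw [smul_mul, flatHodgeDual_mul_self hA, smul_smul, neg_mul_neg, inv_mul_cancel₀ hpf,
      one_smul]

lemma flatHodgeDual_eq_smul_inv (hA : Aᵀ = -A) (hpf : pfaffian A ≠ 0) :
    flatHodgeDual A = -pfaffian A • A⁻¹ := by
  rw [inv_eq_smul_flatHodgeDual hA hpf, smul_smul, neg_mul_neg, mul_inv_cancel₀ hpf, one_smul]

lemma pfaffian_inv (hA : Aᵀ = -A) (hpf : pfaffian A ≠ 0) : pfaffian A⁻¹ = (pfaffian A)⁻¹ := by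
  rw [inv_eq_smul_flatHodgeDual hA hpf, pfaffian_smul, pfaffian_flatHodgeDual hA]
  field_simp

end Antisymmetric

lemma hodgeDual_inv {θ g : Matrix (Fin 4) (Fin 4) ℝ} (hθ : θᵀ = -θ) (hθu : IsUnit θ.det)
    (hg : IsUnit g.det) :
    hodgeDual g θ⁻¹ = -(√g.det * pfaffian θ)⁻¹ • (gᵀ * θ * g) := by
  have hpf := pfaffian_ne_zero hθ hθu
  have hθinv := transpose_inv_eq_neg hθ hθu
  set M := g⁻¹ * θ⁻¹ * g⁻¹ᵀ
  have hM : Mᵀ = -M := by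
    simp only [M, transpose_mul, transpose_transpose, hθinv, Matrix.mul_neg, Matrix.neg_mul,
      Matrix.mul_assoc]
  have hpfM : pfaffian M = (g.det * pfaffian θ)⁻¹ := by
    rw [pfaffian_mul_mul_transpose _ hθinv, pfaffian_inv hθ hpf, det_nonsing_inv,
      Ring.inverse_eq_inv', mul_inv]
  have hMinv : M⁻¹ = gᵀ * θ * g := by
    simp only [M, Matrix.mul_inv_rev, transpose_nonsing_inv, nonsing_inv_nonsing_inv _ hθu,
      nonsing_inv_nonsing_inv _ hg, nonsing_inv_nonsing_inv gᵀ (by rwa [det_transpose]),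
      Matrix.mul_assoc]
  have hsqrt : √g.det * g.det⁻¹ = (√g.det)⁻¹ := by
    simpa [div_eq_mul_inv] using Real.sqrt_div_self' (x := g.det)
  have hpfM0 : pfaffian M ≠ 0 := by simp [hpfM, hpf, hg.ne_zero]
  rw [hodgeDual_eq_smul_flatHodgeDual, flatHodgeDual_eq_smul_inv hM hpfM0, hMinv, hpfM, smul_smul]
  congr 1
  rw [mul_inv, mul_inv, ← hsqrt]
  ring

lemma hodgeDual_inv_eq_smul_inv_iff {θ g : Matrix (Fin 4) (Fin 4) ℝ} (hθ : θᵀ = -θ)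
    (hθu : IsUnit θ.det) (hgs : gᵀ = g) (hg : 0 < g.det) (ε : ℝ) :
    hodgeDual g θ⁻¹ = ε • θ⁻¹ ↔ θ * g * θᵀ = (ε * (√g.det * pfaffian θ)) • g⁻¹ := by
  have hgu : IsUnit g.det := isUnit_iff_ne_zero.2 hg.ne'
  have hc : -(√g.det * pfaffian θ) ≠ 0 :=
    neg_ne_zero.2 (mul_ne_zero (Real.sqrt_pos.2 hg).ne' (pfaffian_ne_zero hθ hθu))
  rw [hodgeDual_inv hθ hθu hgu, hgs, ← inv_neg, inv_smul_eq_iff₀ hc, smul_smul,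
    eq_smul_inv_iff_mul_eq_smul_one hθu, ← Matrix.mul_assoc, ← Matrix.mul_assoc,
    ← eq_smul_inv_iff_mul_eq_smul_one' hgu, hθ, Matrix.mul_neg, neg_eq_iff_eq_neg, ← neg_smul,
    neg_mul, mul_comm ε]

theorem selfdual_iff_effective_eq_induced
    (θ g : Matrix (Fin 4) (Fin 4) ℝ)
    (hθ : θᵀ = -θ) (hθu : IsUnit θ) (hg : g.PosDef) :
    (hodgeDual g θ⁻¹ = θ⁻¹ ∨ hodgeDual g θ⁻¹ = -θ⁻¹) ↔
      (Real.sqrt (θ.det * g.det))⁻¹ • (θ * g * θᵀ) = g⁻¹ := by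
  have hθdet : IsUnit θ.det := (isUnit_iff_isUnit_det θ).mp hθu
  have hgs : gᵀ = g := hg.1.eq
  set c := √g.det * pfaffian θ
  have hc : c ≠ 0 := mul_ne_zero (Real.sqrt_pos.2 hg.det_pos).ne' (pfaffian_ne_zero hθ hθdet)
  have hσ : √(θ.det * g.det) = |c| := by
    rw [det_eq_pfaffian_sq hθ, Real.sqrt_mul (sq_nonneg _), Real.sqrt_sq_eq_abs, abs_mul,
      abs_of_nonneg (Real.sqrt_nonneg _), mul_comm]
  have hscalar_pos : ∀ r : ℝ, θ * g * θᵀ = r • g⁻¹ → 0 < r := fun _ =>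
    (hg.mul_mul_conjTranspose_same (vecMul_injective_of_isUnit hθu)).pos_of_eq_smul hg.inv
  have hself := hodgeDual_inv_eq_smul_inv_iff hθ hθdet hgs hg.det_pos 1
  have hanti := hodgeDual_inv_eq_smul_inv_iff hθ hθdet hgs hg.det_pos (-1)
  rw [one_smul, one_mul] at hself
  rw [neg_one_smul, neg_one_mul] at hanti
  rw [hself, hanti, hσ, inv_smul_eq_iff₀ (abs_ne_zero.2 hc)]
  rcases hc.lt_or_gt with hneg | hpos
  · rw [abs_of_neg hneg]
    exact ⟨fun h => h.resolve_left fun h => by linarith [hscalar_pos _ h], Or.inr⟩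
  · rw [abs_of_pos hpos]
    exact ⟨fun h => h.resolve_right fun h => by linarith [hscalar_pos _ h], Or.inl⟩
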